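/- arXiv:2506.10455 — 3 statements merged into one kernel-verified Lean document; each statement's English description precedes it below -/
import Mathlib

section
/- Let X be a compactum (a compact perfect metric space with more than one point), let n ≥ 2 be an integer, and let f : X → X be a continuous map. Then trans(F_n(f)) is dense in F_n(X) if and only if trans(SF_n(f)) is dense in SF_n(X); moreover, if trans(F_n(f)) is dense in F_n(X), then trans(f) is dense in X. -/
open Metric Set TopologicalSpace

variable (X : Type*) [MetricSpace X] (n : ℕ)

/-- The `n`-fold symmetric product `F_n(X)`: nonempty subsets of `X` with at most `n`
points, as a subspace of the nonempty compact subsets of `X` with the Hausdorff metric. -/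
abbrev Fn := {A : NonemptyCompacts X // (A : Set X).Finite ∧ (A : Set X).ncard ≤ n}

/-- The induced map `F_n(f)` on the `n`-fold symmetric product, `A ↦ f(A)`. -/
noncomputable def FnMap (f : X → X) : Fn X n → Fn X n := fun A =>
  ⟨⟨⟨f '' (A.1 : Set X), (A.2.1.image f).isCompact⟩, A.1.nonempty.image f⟩,
    A.2.1.image f, le_trans (Set.ncard_image_le A.2.1) A.2.2⟩

/-- `F_1(X) ⊆ F_n(X)`: the set of singletons. -/
def F1 : Set (Fn X n) := {A | ∃ x : X, (A.1 : Set X) = {x}}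

/-- The setoid collapsing `F_1(X)` to a point. -/
def SFnSetoid : Setoid (Fn X n) where
  r A B := A = B ∨ (A ∈ F1 X n ∧ B ∈ F1 X n)
  iseqv := by
    refine ⟨fun _ => Or.inl rfl, fun h => h.imp Eq.symm And.symm, fun h₁ h₂ => ?_⟩
    rcases h₁ with rfl | h₁
    · exact h₂
    · rcases h₂ with rfl | h₂
      · exact Or.inr h₁
      · exact Or.inr ⟨h₁.1, h₂.2⟩

/-- The `n`-fold symmetric product suspension `SF_n(X) = F_n(X)/F_1(X)`,
with the quotient topology. -/
abbrev SFn := Quotient (SFnSetoid X n)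

/-- The quotient map `q : F_n(X) → SF_n(X)`. -/
def SFnQ : Fn X n → SFn X n := Quotient.mk (SFnSetoid X n)

/-- The induced map `SF_n(f)` on the suspension, with `SF_n(f) ∘ q = q ∘ F_n(f)`. -/
noncomputable def SFnMap (f : X → X) : SFn X n → SFn X n :=
  Quotient.lift (fun A => SFnQ X n (FnMap X n f A))
    (fun A B h => Quotient.sound (by
      rcases h with rfl | ⟨⟨x, hx⟩, ⟨y, hy⟩⟩
      · exact Or.inl rfl
      · exact Or.inr ⟨⟨f x, by simp [FnMap, hx]⟩, ⟨f y, by simp [FnMap, hy]⟩⟩))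

/-- The metric `ρ` on `SF_n(X)`:
`ρ(χ₁,χ₂) = H(F_1(X) ∪ q⁻¹(χ₁), F_1(X) ∪ q⁻¹(χ₂))` where `H` is the Hausdorff
distance between subsets of `F_n(X)`. -/
noncomputable def SFnDist : SFn X n → SFn X n → ℝ := fun a b =>
  Metric.hausdorffDist (F1 X n ∪ SFnQ X n ⁻¹' {a}) (F1 X n ∪ SFnQ X n ⁻¹' {b})

/-- `z` is a transitive point of `g`: its forward orbit `{g^k(z) : k ∈ ℤ₊}` is dense. -/
def TransitivePt {Z : Type*} [TopologicalSpace Z] (g : Z → Z) (z : Z) : Prop :=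
  Dense (Set.range fun k : ℕ => g^[k] z)

/-!
The quotient map `q : F_n(X) → SF_n(X)` semiconjugates `F_n(f)` to `SF_n(f)` and is injective off
`F_1(X)`, which is closed and, since `X` is perfect and `n ≥ 2`, has dense complement. Hence
`trans(F_n(f)) = q⁻¹(trans(SF_n(f)))`, and density passes through `q` in both directions.
If `A` is a transitive point of `F_n(f)` and `a ∈ A`, then `f^k(A)` being Hausdorff-close to `{y}`
forces `f^k(a)` close to `y`, so `a` is a transitive point of `f`; such `a` are found near every
point `x` by taking `A` close to `{x}`.
-/

open Topology

theorem TransitivePt.map_of_semiconj {Y Z : Type*} [TopologicalSpace Y] [TopologicalSpace Z]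
    {g : Y → Y} {h : Z → Z} {π : Y → Z} (hπ : Continuous π) (hπd : DenseRange π)
    (hsc : Function.Semiconj π g h) {y : Y} (hy : TransitivePt g y) :
    TransitivePt h (π y) := by
  have horbit : (fun k : ℕ => h^[k] (π y)) = π ∘ fun k : ℕ => g^[k] y :=
    funext fun k => (hsc.iterate_right k y).symm
  rw [TransitivePt, horbit, range_comp]
  exact hπd.dense_image hπ hy

section SymmetricProduct

variable {X n}

theorem Fn.dist_eq (A B : Fn X n) : dist A B = hausdorffDist (A.1 : Set X) B.1 :=
  NonemptyCompacts.dist_eq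

theorem Fn.exists_dist_lt_of_mem {A B : Fn X n} {r : ℝ} (h : dist A B < r) {a : X}
    (ha : a ∈ (A.1 : Set X)) : ∃ b ∈ (B.1 : Set X), dist a b < r := by
  refine exists_dist_lt_of_hausdorffDist_lt ha ((Fn.dist_eq A B).symm ▸ h) ?_
  exact hausdorffEDist_ne_top_of_nonempty_of_bounded A.1.nonempty B.1.nonempty
    A.1.isCompact.isBounded B.1.isCompact.isBounded

def Fn.singleton (hn : 1 ≤ n) (x : X) : Fn X n :=
  ⟨{x}, finite_singleton x, by rwa [NonemptyCompacts.coe_singleton, ncard_singleton]⟩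

def Fn.pair (hn : 2 ≤ n) (x y : X) : Fn X n :=
  ⟨⟨⟨{x, y}, ((finite_singleton y).insert x).isCompact⟩, insert_nonempty x {y}⟩,
    (finite_singleton y).insert x, (ncard_insert_le x {y}).trans (by rwa [ncard_singleton])⟩

theorem Fn.dist_pair_singleton_le (hn : 2 ≤ n) (x y : X) :
    dist (Fn.pair hn x y) (Fn.singleton (one_le_two.trans hn) x) ≤ dist x y := by
  rw [Fn.dist_eq]
  refine hausdorffDist_le_of_mem_dist dist_nonneg ?_ fun b hb => ⟨b, .inl hb, by simp⟩
  rintro a (rfl | rfl)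
  · exact ⟨a, rfl, by simp⟩
  · exact ⟨x, rfl, (dist_comm a x).le⟩

theorem isOpen_compl_F1 : IsOpen (F1 X n)ᶜ := by
  refine Metric.isOpen_iff.2 fun A hA => ?_
  obtain ⟨x, hx, y, hy, hxy⟩ : (A.1 : Set X).Nontrivial :=
    (A.1.nonempty.exists_eq_singleton_or_nontrivial).resolve_left fun ⟨x, hx⟩ => hA ⟨x, hx⟩
  refine ⟨dist x y / 2, by simpa using hxy, fun B hB ⟨z, hz⟩ => ?_⟩
  have hB : dist A B < dist x y / 2 := by rw [dist_comm]; exact hB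
  obtain ⟨x', hx', hxx'⟩ := Fn.exists_dist_lt_of_mem hB hx
  obtain ⟨y', hy', hyy'⟩ := Fn.exists_dist_lt_of_mem hB hy
  rw [hz, mem_singleton_iff] at hx' hy'
  rw [hx'] at hxx'
  rw [hy'] at hyy'
  linarith [dist_triangle_right x y z]

theorem dense_compl_F1 (hX : Perfect (univ : Set X)) (hn : 2 ≤ n) : Dense (F1 X n)ᶜ := by
  refine Metric.dense_iff.2 fun A ε hε => ?_
  by_cases hA : A ∈ F1 X n
  · obtain ⟨x, hx⟩ := hA
    obtain ⟨y, ⟨hyx, -⟩, hne⟩ :=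
      accPt_iff_nhds.1 (hX.acc x (mem_univ x)) _ (ball_mem_nhds x hε)
    have hA : A = Fn.singleton (one_le_two.trans hn) x := Subtype.ext (NonemptyCompacts.ext hx)
    refine ⟨Fn.pair hn x y, ?_, fun ⟨z, hz⟩ => hne ?_⟩
    · rw [mem_ball, hA]
      exact (Fn.dist_pair_singleton_le hn x y).trans_lt (by rwa [dist_comm])
    · have hxz : x ∈ ({z} : Set X) := hz ▸ Or.inl rfl
      have hyz : y ∈ ({z} : Set X) := hz ▸ Or.inr rfl
      exact hyz.trans hxz.symm
  · exact ⟨A, mem_ball_self hε, hA⟩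

theorem FnMap_iterate_coe (f : X → X) (k : ℕ) (A : Fn X n) :
    (((FnMap X n f)^[k] A).1 : Set X) = f^[k] '' A.1 := by
  induction k with
  | zero => simp
  | succ k ih =>
    rw [Function.iterate_succ_apply', Function.iterate_succ', image_comp, ← ih]
    rfl

theorem TransitivePt.of_FnMap (hn : 1 ≤ n) {f : X → X} {A : Fn X n}
    (hA : TransitivePt (FnMap X n f) A) {a : X} (ha : a ∈ (A.1 : Set X)) :
    TransitivePt f a := by
  refine Metric.dense_iff.2 fun y r hr => ?_
  obtain ⟨_, hk, k, rfl⟩ := Metric.dense_iff.1 hA (Fn.singleton hn y) r hr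
  have hmem : f^[k] a ∈ (((FnMap X n f)^[k] A).1 : Set X) := by
    rw [FnMap_iterate_coe]
    exact mem_image_of_mem _ ha
  obtain ⟨_, rfl, hlt⟩ := Fn.exists_dist_lt_of_mem hk hmem
  exact ⟨_, hlt, k, rfl⟩

end SymmetricProduct

section Suspension

variable {X n}

theorem isQuotientMap_SFnQ : IsQuotientMap (SFnQ X n) :=
  isQuotientMap_quotient_mk'

theorem SFnQ_semiconj (f : X → X) : Function.Semiconj (SFnQ X n) (FnMap X n f) (SFnMap X n f) :=
  fun _ => rfl

theorem eq_of_SFnQ_eq_of_notMem_F1 {A B : Fn X n} (hA : A ∉ F1 X n)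
    (h : SFnQ X n A = SFnQ X n B) : A = B :=
  (Quotient.exact h).resolve_right fun h => hA h.1

theorem isOpen_image_SFnQ {V : Set (Fn X n)} (hV : IsOpen V) (hVF : Disjoint V (F1 X n)) :
    IsOpen (SFnQ X n '' V) := by
  rw [← isQuotientMap_SFnQ.isOpen_preimage]
  convert hV
  refine (subset_preimage_image _ _).antisymm' ?_
  rintro A ⟨B, hB, hBA⟩
  rwa [← eq_of_SFnQ_eq_of_notMem_F1 (hVF.notMem_of_mem_left hB) hBA]

variable (hX : Perfect (univ : Set X)) (hn : 2 ≤ n)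
include hX hn

theorem Dense.preimage_SFnQ_diff_F1 {s : Set (SFn X n)} (hs : Dense s) :
    Dense (SFnQ X n ⁻¹' s \ F1 X n) := by
  refine dense_iff_inter_open.2 fun U hU hUne => ?_
  have hV : IsOpen (SFnQ X n '' (U ∩ (F1 X n)ᶜ)) :=
    isOpen_image_SFnQ (hU.inter isOpen_compl_F1) (disjoint_compl_left.mono_left inter_subset_right)
  have hVne : (SFnQ X n '' (U ∩ (F1 X n)ᶜ)).Nonempty :=
    ((dense_compl_F1 hX hn).inter_open_nonempty U hU hUne).image _
  obtain ⟨_, ⟨B, hB, rfl⟩, hBs⟩ := hs.inter_open_nonempty _ hV hVne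
  exact ⟨B, hB.1, hBs, hB.2⟩

theorem TransitivePt.of_SFnMap {f : X → X} {B : Fn X n}
    (hB : TransitivePt (SFnMap X n f) (SFnQ X n B)) : TransitivePt (FnMap X n f) B := by
  refine (hB.preimage_SFnQ_diff_F1 hX hn).mono ?_
  rintro A ⟨⟨k, hk⟩, hA⟩
  have hqA : SFnQ X n A = SFnQ X n ((FnMap X n f)^[k] B) :=
    hk.symm.trans ((SFnQ_semiconj f).iterate_right k B).symm
  exact ⟨k, (eq_of_SFnQ_eq_of_notMem_F1 hA hqA).symm⟩

end Suspension

theorem stmt12_general (X : Type*) [MetricSpace X]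
    (hX : Perfect (Set.univ : Set X))
    (n : ℕ) (hn : 2 ≤ n) (f : X → X) :
    (Dense {A : Fn X n | TransitivePt (FnMap X n f) A} ↔
      Dense {χ : SFn X n | TransitivePt (SFnMap X n f) χ}) ∧
    (Dense {A : Fn X n | TransitivePt (FnMap X n f) A} →
      Dense {x : X | TransitivePt f x}) := by
  have hq := isQuotientMap_SFnQ (X := X) (n := n)
  have htrans : SFnQ X n ⁻¹' {χ | TransitivePt (SFnMap X n f) χ} =
      {A | TransitivePt (FnMap X n f) A} :=
    ext fun _ => ⟨TransitivePt.of_SFnMap hX hn,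
      TransitivePt.map_of_semiconj hq.continuous hq.surjective.denseRange (SFnQ_semiconj f)⟩
  refine ⟨⟨fun hD => ?_, fun hD => ?_⟩, fun hD => Metric.dense_iff.2 fun x ε hε => ?_⟩
  · rw [← htrans] at hD
    simpa only [image_preimage_eq _ hq.surjective] using
      hq.surjective.denseRange.dense_image hq.continuous hD
  · exact htrans ▸ (hD.preimage_SFnQ_diff_F1 hX hn).mono sdiff_subset
  · have hn1 : 1 ≤ n := one_le_two.trans hn
    obtain ⟨A, hAx, hA⟩ := Metric.dense_iff.1 hD (Fn.singleton hn1 x) ε hε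
    obtain ⟨a, ha⟩ := A.1.nonempty
    obtain ⟨_, rfl, hax⟩ := Fn.exists_dist_lt_of_mem (mem_ball.1 hAx) ha
    exact ⟨a, hax, hA.of_FnMap hn1 ha⟩

theorem stmt12 (X : Type*) [MetricSpace X] [CompactSpace X] [Nontrivial X]
    (hX : Perfect (Set.univ : Set X))
    (n : ℕ) (hn : 2 ≤ n) (f : X → X) (hf : Continuous f) :
    (Dense {A : Fn X n | TransitivePt (FnMap X n f) A} ↔
      Dense {χ : SFn X n | TransitivePt (SFnMap X n f) χ}) ∧
    (Dense {A : Fn X n | TransitivePt (FnMap X n f) A} →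
      Dense {x : X | TransitivePt f x}) :=
  stmt12_general X hX n hn f
end

section
/- Let X be a compactum (a compact perfect metric space with more than one point), let n ≥ 2 be an integer, let f : X → X be a continuous map, let Y be a topological space, and let g : Y → Y be a continuous map. Then F_n(f) × g is transitive if and only if SF_n(f) × g is transitive; moreover, if F_n(f) × g is transitive, then f × g is transitive. -/
open Metric Set TopologicalSpace

variable (X : Type*) [MetricSpace X] (n : ℕ)

/-- `g` is (topologically) transitive. -/
def TransitiveMap {Z : Type*} [TopologicalSpace Z] (g : Z → Z) : Prop :=
  ∀ U V : Set Z, IsOpen U → IsOpen V → U.Nonempty → V.Nonempty →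
    ∃ k : ℕ, 0 < k ∧ (g^[k] '' U ∩ V).Nonempty

namespace Aux


variable {X n}

lemma fn_dist (A B : Fn X n) : dist A B = hausdorffDist (A.1 : Set X) (B.1 : Set X) := by
  rw [Subtype.dist_eq, NonemptyCompacts.dist_eq]

lemma fn_edist_ne_top (A B : Fn X n) :
    EMetric.hausdorffEdist (A.1 : Set X) (B.1 : Set X) ≠ ⊤ :=
  Metric.hausdorffEdist_ne_top_of_nonempty_of_bounded A.1.nonempty B.1.nonempty
    A.1.isCompact.isBounded B.1.isCompact.isBounded

lemma isOpen_hyper {U : Set X} (hU : IsOpen U) : IsOpen {A : Fn X n | (A.1 : Set X) ⊆ U} := by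
  rw [Metric.isOpen_iff]
  intro A hA
  obtain ⟨δ, hδ, hsub⟩ := A.1.isCompact.exists_thickening_subset_open hU hA
  refine ⟨δ, hδ, fun B hB => ?_⟩
  intro y hy
  rw [mem_ball, fn_dist] at hB
  obtain ⟨x, hx, hxy⟩ := exists_dist_lt_of_hausdorffDist_lt hy hB (fn_edist_ne_top B A)
  exact hsub (Metric.mem_thickening_iff.2 ⟨x, hx, hxy⟩)

def sing (hn : 1 ≤ n) (x : X) : Fn X n :=
  ⟨⟨⟨{x}, isCompact_singleton⟩, singleton_nonempty x⟩, finite_singleton x, by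
    simpa [Set.ncard_singleton] using hn⟩

lemma sing_lipschitz (hn : 1 ≤ n) : LipschitzWith 1 (sing (X := X) hn) := by
  refine LipschitzWith.of_dist_le_mul fun x y => ?_
  rw [fn_dist, NNReal.coe_one, one_mul]
  refine hausdorffDist_le_of_mem_dist dist_nonneg ?_ ?_
  · intro a ha
    exact ⟨y, rfl, by rw [show a = x from ha]⟩
  · intro a ha
    exact ⟨x, rfl, by rw [show a = y from ha, dist_comm]⟩

lemma F1_eq_range (hn : 1 ≤ n) : F1 X n = Set.range (sing (X := X) hn) := by
  ext A
  constructor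
  · rintro ⟨x, hx⟩
    exact ⟨x, Subtype.ext (NonemptyCompacts.ext hx.symm)⟩
  · rintro ⟨x, rfl⟩; exact ⟨x, rfl⟩

lemma isClosed_F1 [CompactSpace X] (hn : 1 ≤ n) : IsClosed (F1 X n) := by
  rw [F1_eq_range hn]
  exact (isCompact_range (sing_lipschitz hn).continuous).isClosed

/-- every nonempty open subset of `Fn X n` meets the complement of `F1`. -/
lemma exists_notin_F1 (hX : Perfect (Set.univ : Set X)) (hn : 2 ≤ n)
    {W : Set (Fn X n)} (hW : IsOpen W) (hne : W.Nonempty) : (W \ F1 X n).Nonempty := by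
  obtain ⟨A, hA⟩ := hne
  by_cases hA1 : A ∈ F1 X n
  · obtain ⟨x, hx⟩ := hA1
    obtain ⟨ε, hε, hball⟩ := Metric.isOpen_iff.1 hW A hA
    have hacc := hX.acc x (mem_univ x)
    rw [accPt_iff_nhds] at hacc
    obtain ⟨y, ⟨hy, -⟩, hyx⟩ := hacc (Metric.ball x ε) (Metric.ball_mem_nhds x hε)
    have hfin : ({x, y} : Set X).Finite := (finite_singleton x).insert y |>.subset (by
      intro z hz; rcases hz with rfl | rfl <;> simp)
    refine ⟨⟨⟨⟨({x, y} : Set X), hfin.isCompact⟩, ⟨x, by simp⟩⟩, hfin, ?_⟩, ?_, ?_⟩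
    · calc ({x, y} : Set X).ncard ≤ ({y} : Set X).ncard + 1 := Set.ncard_insert_le x {y}
        _ ≤ n := by simpa [Set.ncard_singleton] using hn
    · apply hball
      rw [mem_ball, fn_dist, hx]
      have hle : hausdorffDist ({x, y} : Set X) ({x} : Set X) ≤ dist y x := by
        refine hausdorffDist_le_of_mem_dist dist_nonneg ?_ ?_
        · rintro a (rfl | rfl)
          · exact ⟨a, rfl, by simpa using dist_nonneg⟩
          · exact ⟨x, rfl, le_refl _⟩
        · rintro a rfl; exact ⟨a, by simp, by simpa using dist_nonneg⟩
      calc hausdorffDist ({x, y} : Set X) ({x} : Set X) ≤ dist y x := hle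
        _ < ε := by rwa [← mem_ball]
    · rintro ⟨z, hz⟩
      have hz' : ({x, y} : Set X) = {z} := hz
      have hxz : x = z := by
        have hh : x ∈ ({x, y} : Set X) := by simp
        rw [hz'] at hh; exact hh
      have hyz : y = z := by
        have hh : y ∈ ({x, y} : Set X) := by simp
        rw [hz'] at hh; exact hh
      exact hyx (hyz.trans hxz.symm)
  · exact ⟨A, hA, hA1⟩





lemma q_cont : Continuous (SFnQ X n) := continuous_quot_mk

lemma q_surj : Function.Surjective (SFnQ X n) := Quot.exists_rep

lemma q_inj {A B : Fn X n} (hB : B ∉ F1 X n) (h : SFnQ X n A = SFnQ X n B) : A = B := by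
  have h' : A = B ∨ (A ∈ F1 X n ∧ B ∈ F1 X n) := Quotient.exact h
  rcases h' with h' | h'
  · exact h'
  · exact absurd h'.2 hB

lemma isOpen_q_image {W : Set (Fn X n)} (hW : IsOpen W) (hW1 : ∀ A ∈ W, A ∉ F1 X n) :
    IsOpen (SFnQ X n '' W) := by
  have hpre : SFnQ X n ⁻¹' (SFnQ X n '' W) = W := by
    ext B
    constructor
    · rintro ⟨A, hA, hAB⟩
      have h' : A = B ∨ (A ∈ F1 X n ∧ B ∈ F1 X n) := Quotient.exact hAB
      rcases h' with rfl | h'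
      · exact hA
      · exact absurd h'.1 (hW1 A hA)
    · intro hB; exact ⟨B, hB, rfl⟩
  refine (isQuotientMap_quot_mk.isOpen_preimage).mp ?_
  show IsOpen (SFnQ X n ⁻¹' (SFnQ X n '' W))
  rw [hpre]; exact hW

lemma sfn_q (f : X → X) (A : Fn X n) :
    SFnMap X n f (SFnQ X n A) = SFnQ X n (FnMap X n f A) := rfl

lemma sfn_iter (f : X → X) (k : ℕ) (A : Fn X n) :
    (SFnMap X n f)^[k] (SFnQ X n A) = SFnQ X n ((FnMap X n f)^[k] A) := by
  induction k generalizing A with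
  | zero => rfl
  | succ k ih =>
    rw [Function.iterate_succ_apply, Function.iterate_succ_apply, sfn_q, ih]

lemma fnmap_coe (f : X → X) (A : Fn X n) :
    (((FnMap X n f) A).1 : Set X) = f '' (A.1 : Set X) := rfl

lemma fnmap_iter (f : X → X) (k : ℕ) (A : Fn X n) :
    (((FnMap X n f)^[k] A).1 : Set X) = f^[k] '' (A.1 : Set X) := by
  induction k generalizing A with
  | zero => simp
  | succ k ih =>
    rw [Function.iterate_succ_apply', fnmap_coe, ih, ← Set.image_comp,
      ← Function.iterate_succ' f k]


end Aux

theorem stmt13 (X : Type*) [MetricSpace X] [CompactSpace X] [Nontrivial X]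
    (hX : Perfect (Set.univ : Set X))
    (n : ℕ) (hn : 2 ≤ n) (f : X → X) (hf : Continuous f)
    (Y : Type*) [TopologicalSpace Y] (g : Y → Y) (hg : Continuous g) :
    (TransitiveMap (Prod.map (FnMap X n f) g) ↔ TransitiveMap (Prod.map (SFnMap X n f) g)) ∧
    (TransitiveMap (Prod.map (FnMap X n f) g) → TransitiveMap (Prod.map f g)) := by
  have hn1 : 1 ≤ n := le_trans one_le_two hn
  -- Direction 1 : Fn transitive → SFn transitive
  have hFS : TransitiveMap (Prod.map (FnMap X n f) g) →
      TransitiveMap (Prod.map (SFnMap X n f) g) := by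
    intro hT U V hU hV hUne hVne
    set Q : Fn X n × Y → SFn X n × Y := fun p => (SFnQ X n p.1, p.2) with hQdef
    have hqc : Continuous Q := (Aux.q_cont.comp continuous_fst).prodMk continuous_snd
    have hQs : Function.Surjective Q := fun p => by
      obtain ⟨A, hA⟩ := Aux.q_surj (n := n) p.1
      exact ⟨(A, p.2), by simp [hQdef, hA]⟩
    obtain ⟨k, hk, w, hw⟩ := hT (Q ⁻¹' U) (Q ⁻¹' V) (hU.preimage hqc) (hV.preimage hqc)
      (hUne.preimage hQs) (hVne.preimage hQs)
    obtain ⟨⟨⟨A, y⟩, hpU, rfl⟩, hpV⟩ := hw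
    refine ⟨k, hk, Q ((Prod.map (FnMap X n f) g)^[k] (A, y)), ⟨Q (A, y), hpU, ?_⟩, hpV⟩
    simp only [hQdef, Prod.map_iterate, Prod.map_apply, Aux.sfn_iter]
  -- Direction 2 : SFn transitive → Fn transitive
  have hSF : TransitiveMap (Prod.map (SFnMap X n f) g) →
      TransitiveMap (Prod.map (FnMap X n f) g) := by
    intro hT U V hU hV hUne hVne
    obtain ⟨u, hu⟩ := hUne
    obtain ⟨v, hv⟩ := hVne
    obtain ⟨W₁, O₁, hW₁, hO₁, hu1, hu2, hbox₁⟩ := (isOpen_prod_iff.1 hU) u.1 u.2 hu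
    obtain ⟨W₂, O₂, hW₂, hO₂, hv1, hv2, hbox₂⟩ := (isOpen_prod_iff.1 hV) v.1 v.2 hv
    set W₁' := W₁ \ F1 X n with hW₁'def
    set W₂' := W₂ \ F1 X n with hW₂'def
    have hW₁'o : IsOpen W₁' := hW₁.sdiff (Aux.isClosed_F1 hn1)
    have hW₂'o : IsOpen W₂' := hW₂.sdiff (Aux.isClosed_F1 hn1)
    have hW₁'ne : W₁'.Nonempty := Aux.exists_notin_F1 hX hn hW₁ ⟨u.1, hu1⟩
    have hW₂'ne : W₂'.Nonempty := Aux.exists_notin_F1 hX hn hW₂ ⟨v.1, hv1⟩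
    have hQ₁ : IsOpen (SFnQ X n '' W₁') := Aux.isOpen_q_image hW₁'o (fun A hA => hA.2)
    have hQ₂ : IsOpen (SFnQ X n '' W₂') := Aux.isOpen_q_image hW₂'o (fun A hA => hA.2)
    obtain ⟨k, hk, w, hw⟩ := hT ((SFnQ X n '' W₁') ×ˢ O₁) ((SFnQ X n '' W₂') ×ˢ O₂)
      (hQ₁.prod hO₁) (hQ₂.prod hO₂)
      ((hW₁'ne.image _).prod ⟨u.2, hu2⟩) ((hW₂'ne.image _).prod ⟨v.2, hv2⟩)
    obtain ⟨⟨⟨χ, y⟩, ⟨⟨A, hA, rfl⟩, hyO⟩, rfl⟩, hpV⟩ := hw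
    rw [Prod.map_iterate] at hpV
    simp only [Prod.map_apply, Set.mem_prod, Aux.sfn_iter] at hpV
    obtain ⟨⟨B, hB, hBe⟩, hgy⟩ := hpV
    have hAB : (FnMap X n f)^[k] A = B := Aux.q_inj hB.2 hBe.symm
    refine ⟨k, hk, (Prod.map (FnMap X n f) g)^[k] (A, y),
      ⟨(A, y), hbox₁ ⟨hA.1, hyO⟩, rfl⟩, ?_⟩
    rw [Prod.map_iterate]
    exact hbox₂ ⟨by rw [Prod.map_apply]; simpa [hAB] using hB.1, hgy⟩
  -- Direction 3 : Fn transitive → base transitive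
  have hFb : TransitiveMap (Prod.map (FnMap X n f) g) → TransitiveMap (Prod.map f g) := by
    intro hT U V hU hV hUne hVne
    obtain ⟨u, hu⟩ := hUne
    obtain ⟨v, hv⟩ := hVne
    obtain ⟨U₁, O₁, hU₁, hO₁, hu1, hu2, hbox₁⟩ := (isOpen_prod_iff.1 hU) u.1 u.2 hu
    obtain ⟨V₁, O₂, hV₁, hO₂, hv1, hv2, hbox₂⟩ := (isOpen_prod_iff.1 hV) v.1 v.2 hv
    have hHU : IsOpen {A : Fn X n | (A.1 : Set X) ⊆ U₁} := Aux.isOpen_hyper hU₁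
    have hHV : IsOpen {A : Fn X n | (A.1 : Set X) ⊆ V₁} := Aux.isOpen_hyper hV₁
    obtain ⟨k, hk, w, hw⟩ := hT ({A : Fn X n | (A.1 : Set X) ⊆ U₁} ×ˢ O₁)
      ({A : Fn X n | (A.1 : Set X) ⊆ V₁} ×ˢ O₂)
      (hHU.prod hO₁) (hHV.prod hO₂)
      ⟨(Aux.sing hn1 u.1, u.2), by
        refine ⟨?_, hu2⟩
        show ((Aux.sing hn1 u.1 : Fn X n).1 : Set X) ⊆ U₁
        exact Set.singleton_subset_iff.2 hu1⟩
      ⟨(Aux.sing hn1 v.1, v.2), by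
        refine ⟨?_, hv2⟩
        show ((Aux.sing hn1 v.1 : Fn X n).1 : Set X) ⊆ V₁
        exact Set.singleton_subset_iff.2 hv1⟩
    obtain ⟨⟨⟨A, y⟩, ⟨hAU, hyO⟩, rfl⟩, hpV⟩ := hw
    simp only [Prod.map_iterate, Prod.map_apply, Set.mem_prod, Set.mem_setOf_eq,
      Aux.fnmap_iter] at hpV
    obtain ⟨hAV, hgy⟩ := hpV
    obtain ⟨a, ha⟩ := A.1.nonempty
    refine ⟨k, hk, (Prod.map f g)^[k] (a, y), ⟨(a, y), hbox₁ ⟨hAU ha, hyO⟩, rfl⟩, ?_⟩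
    rw [Prod.map_iterate]
    exact hbox₂ ⟨hAV ⟨a, ha, rfl⟩, hgy⟩
  exact ⟨⟨hFS, hSF⟩, hFb⟩
end

section
/- Let X be a compactum (a compact perfect metric space with more than one point), let n ≥ 2 be an integer, and let f : X → X be a continuous map. Then F_n(f) is an F-system if and only if SF_n(f) is an F-system; moreover, if F_n(f) is an F-system, then f is an F-system. -/
open Metric Set TopologicalSpace

variable (X : Type*) [MetricSpace X] (n : ℕ)

/-- `g` is totally transitive: `g^k` is transitive for every `k ≥ 1`. -/
def TotallyTransitive {Z : Type*} [TopologicalSpace Z] (g : Z → Z) : Prop :=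
  ∀ k : ℕ, 0 < k → TransitiveMap (g^[k])

/-- `z` is a periodic point of `g`. -/
def PeriodicPt' {Z : Type*} (g : Z → Z) (z : Z) : Prop :=
  ∃ k : ℕ, 0 < k ∧ g^[k] z = z

/-- `g` is an F-system: totally transitive with dense periodic points. -/
def FSystem {Z : Type*} [TopologicalSpace Z] (g : Z → Z) : Prop :=
  TotallyTransitive g ∧ Dense {z : Z | PeriodicPt' g z}

namespace Stmt14Aux

variable {X : Type*} [MetricSpace X] {n : ℕ}

lemma fn_dist_eq (A B : Fn X n) :
    dist A B = Metric.hausdorffDist (A.1 : Set X) (B.1 : Set X) := by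
  rw [Subtype.dist_eq, NonemptyCompacts.dist_eq]

lemma fn_edist_ne_top (A B : Fn X n) :
    EMetric.hausdorffEdist (A.1 : Set X) (B.1 : Set X) ≠ ⊤ :=
  Metric.hausdorffEdist_ne_top_of_nonempty_of_bounded A.1.nonempty B.1.nonempty
    A.2.1.isBounded B.2.1.isBounded

noncomputable def sing (hn : 1 ≤ n) (x : X) : Fn X n :=
  ⟨⟨⟨{x}, isCompact_singleton⟩, Set.singleton_nonempty x⟩, Set.finite_singleton x,
    by simpa using hn⟩

lemma sing_coe (hn : 1 ≤ n) (x : X) : ((sing hn x).1 : Set X) = {x} := rfl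

noncomputable def doub (hn : 2 ≤ n) (x y : X) : Fn X n :=
  ⟨⟨⟨{x, y}, ((Set.finite_singleton y).insert x).isCompact⟩, ⟨x, Set.mem_insert x {y}⟩⟩,
    (Set.finite_singleton y).insert x,
    le_trans (le_trans (Set.ncard_insert_le x {y}) (by simp)) hn⟩

lemma doub_coe (hn : 2 ≤ n) (x y : X) : ((doub hn x y).1 : Set X) = {x, y} := rfl

lemma doub_not_F1 (hn : 2 ≤ n) {x y : X} (hxy : x ≠ y) : doub hn x y ∉ F1 X n := by
  rintro ⟨z, hz⟩
  rw [doub_coe] at hz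
  have hx : x ∈ ({z} : Set X) := hz ▸ Set.mem_insert x {y}
  have hy : y ∈ ({z} : Set X) := hz ▸ Set.mem_insert_of_mem x rfl
  exact hxy (hx.trans hy.symm)

lemma semiconj (f : X → X) :
    Function.Semiconj (SFnQ X n) (FnMap X n f) (SFnMap X n f) := fun _ => rfl

lemma q_cont : Continuous (SFnQ X n) := continuous_quotient_mk'

lemma q_surj : Function.Surjective (SFnQ X n) := fun b => Quot.exists_rep b

lemma q_eq_iff {A B : Fn X n} :
    SFnQ X n A = SFnQ X n B ↔ (A = B ∨ (A ∈ F1 X n ∧ B ∈ F1 X n)) :=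
  ⟨fun h => Quotient.exact h, fun h => Quotient.sound h⟩

lemma isOpen_q_image {W : Set (Fn X n)} (hW : IsOpen W) (hWF : ∀ A ∈ W, A ∉ F1 X n) :
    IsOpen (SFnQ X n '' W) := by
  rw [← (isQuotientMap_quotient_mk' (s := SFnSetoid X n)).isOpen_preimage]
  have : SFnQ X n ⁻¹' (SFnQ X n '' W) = W := by
    ext A
    constructor
    · rintro ⟨B, hB, hq⟩
      rcases q_eq_iff.1 hq with rfl | ⟨hB1, _⟩
      · exact hB
      · exact absurd hB1 (hWF B hB)
    · exact fun h => Set.mem_image_of_mem _ h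
  show IsOpen (SFnQ X n ⁻¹' (SFnQ X n '' W))
  rw [this]; exact hW

lemma isClosed_F1 : IsClosed (F1 X n) := by
  rw [← isOpen_compl_iff, Metric.isOpen_iff]
  intro A hA
  obtain ⟨x, hx⟩ := A.1.nonempty
  have hex : ∃ y ∈ (A.1 : Set X), y ≠ x := by
    by_contra h
    push_neg at h
    exact hA ⟨x, Set.eq_singleton_iff_unique_mem.2 ⟨hx, h⟩⟩
  obtain ⟨y, hy, hyx⟩ := hex
  have hdpos : 0 < dist x y := dist_pos.2 (Ne.symm hyx)
  refine ⟨dist x y / 2, by positivity, fun B hB => ?_⟩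
  rintro ⟨z, hz⟩
  rw [Metric.mem_ball, fn_dist_eq] at hB
  obtain ⟨x', hx', hdx⟩ := Metric.exists_dist_lt_of_hausdorffDist_lt' hx hB (fn_edist_ne_top B A)
  obtain ⟨y', hy', hdy⟩ := Metric.exists_dist_lt_of_hausdorffDist_lt' hy hB (fn_edist_ne_top B A)
  rw [hz, Set.mem_singleton_iff] at hx' hy'
  rw [hx'] at hdx
  rw [hy'] at hdy
  have htri : dist x y ≤ dist z x + dist z y := dist_triangle_left x y z
  linarith

lemma exists_diff_F1 (hX : Perfect (Set.univ : Set X)) (hn : 2 ≤ n)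
    {U : Set (Fn X n)} (hU : IsOpen U) (hne : U.Nonempty) :
    ∃ A ∈ U, A ∉ F1 X n := by
  obtain ⟨A, hA⟩ := hne
  by_cases hAF : A ∈ F1 X n
  · obtain ⟨x, hx⟩ := hAF
    obtain ⟨ε, hε, hball⟩ := Metric.isOpen_iff.1 hU A hA
    have hacc := hX.acc x (Set.mem_univ x)
    rw [accPt_iff_nhds] at hacc
    obtain ⟨y, ⟨hy1, -⟩, hyx⟩ :=
      hacc (Metric.ball x (ε / 2)) (Metric.ball_mem_nhds x (by linarith))
    refine ⟨doub hn x y, hball ?_, doub_not_F1 hn (Ne.symm hyx)⟩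
    rw [Metric.mem_ball, fn_dist_eq, doub_coe, hx]
    have hd : Metric.hausdorffDist ({x, y} : Set X) ({x} : Set X) ≤ ε / 2 := by
      apply Metric.hausdorffDist_le_of_mem_dist (by linarith)
      · rintro a (rfl | rfl)
        · exact ⟨a, rfl, by simp; linarith⟩
        · exact ⟨x, rfl, le_of_lt (by rwa [Metric.mem_ball] at hy1)⟩
      · rintro a rfl
        exact ⟨a, Set.mem_insert a {y}, by simp; linarith⟩
    linarith

  · exact ⟨A, hA, hAF⟩

lemma isOpen_sub {U : Set X} (hU : IsOpen U) :
    IsOpen {A : Fn X n | (A.1 : Set X) ⊆ U} := by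
  rw [Metric.isOpen_iff]
  intro A hA
  obtain ⟨δ, hδ, hsub⟩ := A.2.1.isCompact.exists_thickening_subset_open hU hA
  refine ⟨δ, hδ, fun B hB => ?_⟩
  rw [Metric.mem_ball, fn_dist_eq] at hB
  intro b hb
  obtain ⟨a, ha, hab⟩ := Metric.exists_dist_lt_of_hausdorffDist_lt hb hB (fn_edist_ne_top B A)
  exact hsub (Metric.mem_thickening_iff.2 ⟨a, ha, hab⟩)

lemma isOpen_hit {V : Set X} (hV : IsOpen V) :
    IsOpen {A : Fn X n | ((A.1 : Set X) ∩ V).Nonempty} := by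
  rw [Metric.isOpen_iff]
  rintro A ⟨x, hxA, hxV⟩
  obtain ⟨ε, hε, hball⟩ := Metric.isOpen_iff.1 hV x hxV
  refine ⟨ε, hε, fun B hB => ?_⟩
  rw [Metric.mem_ball, fn_dist_eq] at hB
  obtain ⟨b, hb, hdb⟩ := Metric.exists_dist_lt_of_hausdorffDist_lt' hxA hB (fn_edist_ne_top B A)
  exact ⟨b, hb, hball (Metric.mem_ball.2 hdb)⟩

lemma fnMap_coe (f : X → X) (A : Fn X n) :
    ((FnMap X n f A).1 : Set X) = f '' (A.1 : Set X) := rfl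

lemma fnMap_iterate (f : X → X) (k : ℕ) (A : Fn X n) :
    (((FnMap X n f)^[k] A).1 : Set X) = f^[k] '' (A.1 : Set X) := by
  induction k with
  | zero => simp
  | succ k ih =>
    rw [Function.iterate_succ_apply', fnMap_coe, ih, Function.iterate_succ',
      Set.image_comp]

lemma factor {A : Type*} {B : Type*} [TopologicalSpace A] [TopologicalSpace B]
    {q : A → B} {g : A → A} {h : B → B} (hq : Continuous q) (hs : Function.Surjective q)
    (hc : Function.Semiconj q g h) : FSystem g → FSystem h := by
  rintro ⟨ht, hd⟩
  have hpre : ∀ {U : Set B}, U.Nonempty → (q ⁻¹' U).Nonempty := by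
    rintro U ⟨b, hb⟩
    obtain ⟨a, rfl⟩ := hs b
    exact ⟨a, hb⟩
  constructor
  · intro k hk U V hU hV hUne hVne
    obtain ⟨j, hj, x, ⟨a, haU, rfl⟩, hxV⟩ :=
      ht k hk (q ⁻¹' U) (q ⁻¹' V) (hU.preimage hq) (hV.preimage hq) (hpre hUne) (hpre hVne)
    exact ⟨j, hj, q ((g^[k])^[j] a),
      ⟨q a, haU, (((hc.iterate_right k).iterate_right j) a).symm⟩, hxV⟩
  · rw [dense_iff_inter_open] at hd ⊢
    intro U hU hUne
    obtain ⟨a, haU, j, hj, hja⟩ := hd (q ⁻¹' U) (hU.preimage hq) (hpre hUne)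
    exact ⟨q a, haU, j, hj, (((hc.iterate_right j) a).symm.trans (congrArg q hja))⟩

end Stmt14Aux


theorem stmt14 (X : Type*) [MetricSpace X] [CompactSpace X] [Nontrivial X]
    (hX : Perfect (Set.univ : Set X))
    (n : ℕ) (hn : 2 ≤ n) (f : X → X) (hf : Continuous f) :
    (FSystem (FnMap X n f) ↔ FSystem (SFnMap X n f)) ∧
    (FSystem (FnMap X n f) → FSystem f) := by
  classical
  have hsc := Stmt14Aux.semiconj (X := X) (n := n) f
  have h1 : FSystem (FnMap X n f) → FSystem (SFnMap X n f) :=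
    Stmt14Aux.factor Stmt14Aux.q_cont Stmt14Aux.q_surj hsc
  have h2 : FSystem (SFnMap X n f) → FSystem (FnMap X n f) := by
    rintro ⟨ht, hd⟩
    constructor
    · intro k hk U V hU hV hUne hVne
      obtain ⟨A₀, hA₀U, hA₀F⟩ := Stmt14Aux.exists_diff_F1 hX hn hU hUne
      obtain ⟨B₀, hB₀V, hB₀F⟩ := Stmt14Aux.exists_diff_F1 hX hn hV hVne
      have hU₀ : IsOpen (U \ F1 X n) := hU.sdiff Stmt14Aux.isClosed_F1
      have hV₀ : IsOpen (V \ F1 X n) := hV.sdiff Stmt14Aux.isClosed_F1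
      have hqU : IsOpen (SFnQ X n '' (U \ F1 X n)) :=
        Stmt14Aux.isOpen_q_image hU₀ (fun A hA => hA.2)
      have hqV : IsOpen (SFnQ X n '' (V \ F1 X n)) :=
        Stmt14Aux.isOpen_q_image hV₀ (fun A hA => hA.2)
      obtain ⟨j, hj, χ, ⟨χ', ⟨A, hAU₀, rfl⟩, rfl⟩, B, hBV₀, hBq⟩ :=
        ht k hk _ _ hqU hqV ⟨SFnQ X n A₀, A₀, ⟨hA₀U, hA₀F⟩, rfl⟩
          ⟨SFnQ X n B₀, B₀, ⟨hB₀V, hB₀F⟩, rfl⟩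
      have hkey : SFnQ X n (((FnMap X n f)^[k])^[j] A) = SFnQ X n B :=
        (((hsc.iterate_right k).iterate_right j) A).trans hBq.symm
      rcases Stmt14Aux.q_eq_iff.1 hkey with heq | ⟨_, hBF1⟩
      · exact ⟨j, hj, B, ⟨A, hAU₀.1, heq⟩, hBV₀.1⟩
      · exact absurd hBF1 hBV₀.2
    · rw [dense_iff_inter_open] at hd ⊢
      intro U hU hUne
      obtain ⟨A₀, hA₀U, hA₀F⟩ := Stmt14Aux.exists_diff_F1 hX hn hU hUne
      have hU₀ : IsOpen (U \ F1 X n) := hU.sdiff Stmt14Aux.isClosed_F1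
      have hqU : IsOpen (SFnQ X n '' (U \ F1 X n)) :=
        Stmt14Aux.isOpen_q_image hU₀ (fun A hA => hA.2)
      obtain ⟨χ, ⟨A, hAU₀, rfl⟩, j, hj, hper⟩ :=
        hd _ hqU ⟨SFnQ X n A₀, A₀, ⟨hA₀U, hA₀F⟩, rfl⟩
      have hkey : SFnQ X n ((FnMap X n f)^[j] A) = SFnQ X n A :=
        ((hsc.iterate_right j) A).trans hper
      rcases Stmt14Aux.q_eq_iff.1 hkey with heq | ⟨_, hAF1⟩
      · exact ⟨A, hAU₀.1, j, hj, heq⟩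
      · exact absurd hAF1 hAU₀.2
  have h3 : FSystem (FnMap X n f) → FSystem f := by
    rintro ⟨ht, hd⟩
    have hn1 : 1 ≤ n := le_trans one_le_two hn
    constructor
    · rintro k hk U V hU hV ⟨u, hu⟩ ⟨v, hv⟩
      obtain ⟨j, hj, B, ⟨A, hAU, rfl⟩, hBV⟩ :=
        ht k hk {A : Fn X n | (A.1 : Set X) ⊆ U} {A : Fn X n | ((A.1 : Set X) ∩ V).Nonempty}
          (Stmt14Aux.isOpen_sub hU) (Stmt14Aux.isOpen_hit hV)
          ⟨Stmt14Aux.sing hn1 u, by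
            rw [Set.mem_setOf_eq, Stmt14Aux.sing_coe]
            exact Set.singleton_subset_iff.2 hu⟩
          ⟨Stmt14Aux.sing hn1 v, ⟨v, by rw [Stmt14Aux.sing_coe]; exact rfl, hv⟩⟩
      have hset : ((((FnMap X n f)^[k])^[j] A).1 : Set X) = f^[k * j] '' (A.1 : Set X) := by
        rw [← Function.iterate_mul, Stmt14Aux.fnMap_iterate]
      obtain ⟨w, hw, hwV⟩ := hBV
      rw [hset] at hw
      obtain ⟨a, ha, rfl⟩ := hw
      exact ⟨j, hj, f^[k * j] a,
        ⟨a, hAU ha, congrFun (Function.iterate_mul f k j) a ▸ rfl⟩, hwV⟩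
    · rw [Metric.dense_iff]
      intro x r hr
      obtain ⟨A, hAsub, j, hj, hAper⟩ :=
        (dense_iff_inter_open.1 hd) {A : Fn X n | (A.1 : Set X) ⊆ Metric.ball x r}
          (Stmt14Aux.isOpen_sub Metric.isOpen_ball)
          ⟨Stmt14Aux.sing hn1 x, by
            rw [Set.mem_setOf_eq, Stmt14Aux.sing_coe]
            exact Set.singleton_subset_iff.2 (Metric.mem_ball_self hr)⟩
      have hset : f^[j] '' (A.1 : Set X) = (A.1 : Set X) :=
        (Stmt14Aux.fnMap_iterate f j A).symm.trans
          (congrArg (fun C : Fn X n => ((C.1 : Set X))) hAper)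
      obtain ⟨a, ha⟩ := A.1.nonempty
      have hmaps : Set.MapsTo f^[j] (A.1 : Set X) (A.1 : Set X) :=
        fun y hy => hset ▸ Set.mem_image_of_mem _ hy
      have hsurj : Set.SurjOn f^[j] (A.1 : Set X) (A.1 : Set X) := by
        rw [Set.SurjOn, hset]
      have hinj : Set.InjOn f^[j] (A.1 : Set X) :=
        ((A.2.1.surjOn_iff_bijOn_of_mapsTo hmaps).1 hsurj).injOn
      obtain ⟨p, -, q', -, hpq, heq⟩ :=
        Set.infinite_univ.exists_ne_map_eq_of_mapsTo
          (f := fun m : ℕ => (f^[j])^[m] a) (fun m _ => (hmaps.iterate m) ha) A.2.1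
      have cancel : ∀ p q' : ℕ, p < q' → (f^[j])^[p] a = (f^[j])^[q'] a →
          (f^[j])^[q' - p] a = a := by
        intro p q' hlt he
        have h1 : (f^[j])^[p] ((f^[j])^[q' - p] a) = (f^[j])^[p] a := by
          rw [← Function.iterate_add_apply, Nat.add_sub_cancel' hlt.le, ← he]
        exact (hinj.iterate hmaps p) ((hmaps.iterate (q' - p)) ha) ha h1
      have hfin : ∃ m : ℕ, 0 < m ∧ (f^[j])^[m] a = a := by
        rcases hpq.lt_or_gt with hlt | hlt
        · exact ⟨q' - p, Nat.sub_pos_of_lt hlt, cancel p q' hlt heq⟩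
        · exact ⟨p - q', Nat.sub_pos_of_lt hlt, cancel q' p hlt heq.symm⟩
      obtain ⟨m, hm, hma⟩ := hfin
      refine ⟨a, hAsub ha, j * m, Nat.mul_pos hj hm, ?_⟩
      rw [Function.iterate_mul]
      exact hma
  exact ⟨⟨h1, h2⟩, h3⟩
end
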